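/- The bid profile b_i(δ) = max(v_i, max_{j∈D_i} v_j − δ) with full (truthful) referrals is an ε-approximate Nash equilibrium of TRDM: for every ε > 0 there exists δ0 > 0 such that for every δ ∈ (0, δ0) and every agent i, no unilateral deviation — any bid v'_i ≥ 0 together with deleting any subset of i's out-edges (which removes the corresponding subtrees and their agents from the auction), TRDM then being run on the resulting tree with the other remaining agents bidding b_j(δ) — gives agent i utility more than ε above its utility at the profile (b_j(δ))_{j∈V} on the full tree G. -/

import Mathlib

open Classical

/-- A finite directed tree rooted at the seller `s`: every vertex reaches `s`
by iterating the parent map, and the root is its own parent. The agents are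
the non-root vertices. -/
structure DiffusionTree (α : Type*) where
  s : α
  parent : α → α
  parent_s : parent s = s
  reaches_s : ∀ x : α, ∃ n : ℕ, parent^[n] x = s

namespace DiffusionTree

variable {α : Type*} [Fintype α]

/-- The set of agents: all vertices except the seller. -/
noncomputable def agents (T : DiffusionTree α) : Finset α :=
  Finset.univ.filter (fun x => x ≠ T.s)

/-- `T.desc i j` : `j` is a strict descendant of `i`. -/
def desc (T : DiffusionTree α) (i j : α) : Prop :=
  ∃ n : ℕ, 0 < n ∧ T.parent^[n] j = i

/-- `V_{-i}` relative to the active agent set `A`: remove `i` and its descendants. -/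
noncomputable def Vminus (T : DiffusionTree α) (A : Finset α) (i : α) : Finset α :=
  A.filter (fun j => j ≠ i ∧ ¬ T.desc i j)

/-- `b*_S`: the highest bid in `S`, with `b*_∅ = 0`. -/
noncomputable def bstar (b : α → ℝ) (S : Finset α) : ℝ :=
  WithBot.unbotD 0 ((S.image b).max)

/-- Distance from a vertex to the root. -/
noncomputable def depth (T : DiffusionTree α) (x : α) : ℕ :=
  Nat.find (T.reaches_s x)

/-- The vertex `a_j` on the path `s = a_0, a_1, …, a_k = w` from `s` to `w`. -/
noncomputable def pathVx (T : DiffusionTree α) (w : α) (j : ℕ) : α :=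
  T.parent^[T.depth w - j] w

/-- TRDM payments, on the active agent set `A`, for bids `b` and winner `w`:
the winner pays `b*_{V_{-w}}`; an intermediate path agent `a_j` pays
`b*_{V_{-a_j}} − b*_{V_{-a_{j+1}}}`; everyone else pays `0`. -/
noncomputable def payment (T : DiffusionTree α) (A : Finset α) (b : α → ℝ)
    (w : α) (x : α) : ℝ :=
  if x = w then bstar b (T.Vminus A w)
  else if ∃ j : ℕ, 1 ≤ j ∧ j < T.depth w ∧ T.pathVx w j = x then
    bstar b (T.Vminus A x) - bstar b (T.Vminus A (T.pathVx w (T.depth x + 1)))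
  else 0

/-- TRDM utility of an agent `i` with true valuation `v`. -/
noncomputable def util (T : DiffusionTree α) (A : Finset α) (b : α → ℝ)
    (w : α) (v : ℝ) (i : α) : ℝ :=
  (if i = w then v else 0) - T.payment A b w i

end DiffusionTree

namespace DiffusionTree

variable {α : Type*} [Fintype α]

/-- The equilibrium bid profile `b_i(δ) = max(v_i, max_{j ∈ D_i} v_j − δ)`
(for leaves, `b_i(δ) = v_i`). -/
noncomputable def eqBid (T : DiffusionTree α) (v : α → ℝ) (δ : ℝ) (i : α) : ℝ :=
  max (v i) (bstar v (T.agents.filter (fun j => T.desc i j)) - δ)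

/-- The agents remaining after deleting, for each child `c ∈ E'`, the subtree
rooted at `c`. -/
noncomputable def removeSubtrees (T : DiffusionTree α) (E' : Finset α) : Finset α :=
  T.agents.filter (fun j => ∀ c ∈ E', j ≠ c ∧ ¬ T.desc c j)

end DiffusionTree

/-!
Let `i*` be the agent of highest value `m`. At the profile `b(δ)` the agent `i*` bids `m` and,
values being distinct, everyone else bids strictly less, so `i*` wins. Put `P = b*_{V_{-i}}`.
A deviation of `i` changes neither `V_{-i}` nor the bids in it, and afterwards no bid other than
possibly `i`'s own exceeds `m`; so the deviation earns at most `max 0 (m - P)`. At the profile,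
`i` earns `m - P` if `i = i*`, and `0 = max 0 (m - P)` if `i*` lies in `V_{-i}`; in the remaining
case `i` is an ancestor of `i*`, bids at least `m - δ`, and an ancestor of the winner always earns
at least `max 0 (b_i - P)`. So deviations gain at most `δ`, and `δ0 = ε` works.
-/

namespace DiffusionTree

variable {α : Type*} (T : DiffusionTree α)

theorem iterate_parent_root (n : ℕ) : T.parent^[n] T.s = T.s :=
  Function.iterate_fixed T.parent_s n

theorem iterate_parent_depth (x : α) : T.parent^[T.depth x] x = T.s :=
  Nat.find_spec (T.reaches_s x)

section Tree

variable {T}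

theorem iterate_parent_eq_root_of_le {x : α} {a b : ℕ} (h : T.parent^[a] x = T.s)
    (hab : a ≤ b) : T.parent^[b] x = T.s := by
  obtain ⟨c, rfl⟩ := Nat.exists_eq_add_of_le hab
  rw [Nat.add_comm, Function.iterate_add_apply, h, T.iterate_parent_root]

theorem eq_root_of_iterate_parent_eq {x : α} {n : ℕ} (hn : 0 < n)
    (h : T.parent^[n] x = x) : x = T.s := by
  obtain ⟨N, hN⟩ := T.reaches_s x
  have hperiodic : T.parent^[n * N] x = x := Function.IsPeriodicPt.mul_const (f := T.parent) h N
  rw [← hperiodic]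
  exact iterate_parent_eq_root_of_le hN (Nat.le_mul_of_pos_left N hn)

theorem desc_trans {i j k : α} (hij : T.desc i j) (hjk : T.desc j k) : T.desc i k := by
  obtain ⟨n, hn, rfl⟩ := hij
  obtain ⟨m, hm, rfl⟩ := hjk
  exact ⟨n + m, by omega, Function.iterate_add_apply _ _ _ _⟩

theorem desc_of_parent_eq {c i : α} (h : T.parent c = i) : T.desc i c :=
  ⟨1, one_pos, h⟩

theorem not_desc_self {i : α} (hi : i ≠ T.s) : ¬ T.desc i i := fun ⟨_, hn, h⟩ =>
  hi (eq_root_of_iterate_parent_eq hn h)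

theorem ne_of_desc {i j : α} (hi : i ≠ T.s) (h : T.desc i j) : i ≠ j := by
  rintro rfl
  exact not_desc_self hi h

theorem not_desc_of_desc {i j : α} (hi : i ≠ T.s) (h : T.desc i j) : ¬ T.desc j i :=
  fun h' => not_desc_self hi (desc_trans h h')

end Tree

section Depth

variable {T}

theorem depth_le {x : α} {k : ℕ} (h : T.parent^[k] x = T.s) : T.depth x ≤ k :=
  Nat.find_min' (T.reaches_s x) h

theorem iterate_parent_ne_root {x : α} {k : ℕ} (h : k < T.depth x) : T.parent^[k] x ≠ T.s :=
  Nat.find_min (T.reaches_s x) h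

theorem depth_pos {x : α} (hx : x ≠ T.s) : 0 < T.depth x :=
  Nat.pos_of_ne_zero fun h => hx (by simpa [h] using T.iterate_parent_depth x)

theorem depth_iterate_parent {x : α} {k : ℕ} (h : k ≤ T.depth x) :
    T.depth (T.parent^[k] x) = T.depth x - k := by
  apply le_antisymm
  · apply depth_le
    rw [← Function.iterate_add_apply, Nat.sub_add_cancel h]
    exact T.iterate_parent_depth x
  · have : T.depth x ≤ T.depth (T.parent^[k] x) + k := by
      apply depth_le
      rw [Function.iterate_add_apply]
      exact T.iterate_parent_depth _
    omega

theorem parent_pathVx_succ {w : α} {j : ℕ} (hj : j < T.depth w) :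
    T.parent (T.pathVx w (j + 1)) = T.pathVx w j := by
  rw [pathVx, pathVx, ← Function.iterate_succ_apply' T.parent]
  congr 1
  omega

theorem depth_lt_and_pathVx_depth_of_desc {i w : α} (hi : i ≠ T.s) (h : T.desc i w) :
    T.depth i < T.depth w ∧ T.pathVx w (T.depth i) = i := by
  obtain ⟨k, hk, hki⟩ := h
  have hkw : k < T.depth w := by
    by_contra! hge
    exact hi (hki ▸ iterate_parent_eq_root_of_le (T.iterate_parent_depth w) hge)
  have hdepth : T.depth i = T.depth w - k := hki ▸ depth_iterate_parent hkw.le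
  refine ⟨by omega, ?_⟩
  rw [pathVx, hdepth, Nat.sub_sub_self hkw.le, hki]

/-- The intermediate agents `a_1, …, a_{k-1}` of the path to `w` are exactly its strict
ancestors other than the root. -/
theorem exists_pathVx_eq_iff {w x : α} :
    (∃ j : ℕ, 1 ≤ j ∧ j < T.depth w ∧ T.pathVx w j = x) ↔ x ≠ T.s ∧ T.desc x w := by
  constructor
  · rintro ⟨j, hj1, hjw, rfl⟩
    exact ⟨iterate_parent_ne_root (by omega), T.depth w - j, by omega, rfl⟩
  · rintro ⟨hx, hxw⟩
    obtain ⟨hlt, hpath⟩ := depth_lt_and_pathVx_depth_of_desc hx hxw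
    exact ⟨T.depth x, depth_pos hx, hlt, hpath⟩

end Depth

section Bstar

variable {b : α → ℝ} {S S' : Finset α}

theorem bstar_empty (b : α → ℝ) : bstar b (∅ : Finset α) = 0 := by
  simp [bstar]

theorem bstar_eq_max' (h : S.Nonempty) : bstar b S = (S.image b).max' (h.image b) := by
  rw [bstar, ← Finset.coe_max' (h.image b), WithBot.unbotD_coe]

theorem le_bstar {j : α} (hj : j ∈ S) : b j ≤ bstar b S := by
  rw [bstar_eq_max' ⟨j, hj⟩]
  exact Finset.le_max' _ _ (Finset.mem_image_of_mem b hj)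

theorem bstar_le {m : ℝ} (hm : 0 ≤ m) (h : ∀ j ∈ S, b j ≤ m) : bstar b S ≤ m := by
  rcases S.eq_empty_or_nonempty with rfl | hS
  · rwa [bstar_empty]
  · rw [bstar_eq_max' hS]
    exact Finset.max'_le _ _ _ (by simpa using h)

theorem bstar_nonneg (h : ∀ j ∈ S, 0 ≤ b j) : 0 ≤ bstar b S := by
  rcases S.eq_empty_or_nonempty with rfl | ⟨j, hj⟩
  · rw [bstar_empty]
  · exact (h j hj).trans (le_bstar hj)

theorem bstar_congr {b' : α → ℝ} (h : ∀ j ∈ S, b j = b' j) : bstar b S = bstar b' S := by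
  rw [bstar, bstar, Finset.image_congr h]

theorem bstar_mono (hb : ∀ j ∈ S', 0 ≤ b j) (hS : S ⊆ S') : bstar b S ≤ bstar b S' :=
  bstar_le (bstar_nonneg hb) fun _ hj => le_bstar (hS hj)

end Bstar

section Vminus

variable {T}

theorem mem_Vminus {A : Finset α} {i j : α} :
    j ∈ T.Vminus A i ↔ j ∈ A ∧ j ≠ i ∧ ¬ T.desc i j := by
  simp [Vminus]

theorem Vminus_subset_Vminus_of_desc {i c : α} (h : T.desc i c) (A : Finset α) :
    T.Vminus A i ⊆ T.Vminus A c := by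
  intro j hj
  obtain ⟨hjA, hji, hij⟩ := mem_Vminus.1 hj
  refine mem_Vminus.2 ⟨hjA, ?_, fun hcj => hij (desc_trans h hcj)⟩
  rintro rfl
  exact hij h

end Vminus

section Agents

variable {T} [Fintype α]

theorem mem_agents {x : α} : x ∈ T.agents ↔ x ≠ T.s := by
  simp [agents]

theorem removeSubtrees_subset_agents (E' : Finset α) : T.removeSubtrees E' ⊆ T.agents :=
  Finset.filter_subset _ _

theorem mem_removeSubtrees {i : α} (hi : i ∈ T.agents) {E' : Finset α}
    (hE : ∀ c ∈ E', T.parent c = i) : i ∈ T.removeSubtrees E' := by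
  have his := mem_agents.1 hi
  refine Finset.mem_filter.2 ⟨hi, fun c hc => ?_⟩
  have hic := desc_of_parent_eq (hE c hc)
  exact ⟨ne_of_desc his hic, not_desc_of_desc his hic⟩

theorem Vminus_removeSubtrees {i : α} {E' : Finset α} (hE : ∀ c ∈ E', T.parent c = i) :
    T.Vminus (T.removeSubtrees E') i = T.Vminus T.agents i := by
  ext j
  simp only [Vminus, removeSubtrees, Finset.mem_filter]
  refine ⟨fun ⟨⟨hj, _⟩, hji⟩ => ⟨hj, hji⟩, fun ⟨hj, hji, hij⟩ => ⟨⟨hj, fun c hc => ?_⟩, hji, hij⟩⟩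
  have hic := desc_of_parent_eq (hE c hc)
  refine ⟨?_, fun hcj => hij (desc_trans hic hcj)⟩
  rintro rfl
  exact hij hic

theorem bstar_update_Vminus_removeSubtrees [DecidableEq α] {b : α → ℝ} {i : α} (β : ℝ) {E' : Finset α}
    (hE : ∀ c ∈ E', T.parent c = i) :
    bstar (Function.update b i β) (T.Vminus (T.removeSubtrees E') i) =
      bstar b (T.Vminus T.agents i) := by
  rw [Vminus_removeSubtrees hE]
  exact bstar_congr fun j hj => Function.update_of_ne (mem_Vminus.1 hj).2.1 β b

end Agents

section Utility

variable {T} {A : Finset α} {b : α → ℝ} {w i : α} {vi : ℝ}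

theorem util_winner : T.util A b i vi i = vi - bstar b (T.Vminus A i) := by
  simp [util, payment]

theorem util_of_desc (hi : i ≠ T.s) (hiw : i ≠ w) (h : T.desc i w) :
    T.util A b w vi i =
      bstar b (T.Vminus A (T.pathVx w (T.depth i + 1))) - bstar b (T.Vminus A i) := by
  simp [util, payment, hiw, exists_pathVx_eq_iff.2 ⟨hi, h⟩]

theorem util_of_not_desc (hiw : i ≠ w) (h : ¬ T.desc i w) : T.util A b w vi i = 0 := by
  simp [util, payment, hiw, exists_pathVx_eq_iff, h]

theorem util_le_max_zero_sub {m : ℝ} (hm : 0 ≤ m) (hvi : vi ≤ m) (hi : i ≠ T.s)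
    (hw : w ∈ A) (hwmax : ∀ j ∈ A, b j ≤ b w) (hb : ∀ j ∈ A, j ≠ i → b j ≤ m) :
    T.util A b w vi i ≤ max 0 (m - bstar b (T.Vminus A i)) := by
  by_cases hiw : i = w
  · subst hiw
    rw [util_winner]
    linarith [le_max_right 0 (m - bstar b (T.Vminus A i))]
  have hbA : ∀ j ∈ A, b j ≤ m := by
    intro j hj
    by_cases hji : j = i
    · exact (hwmax j hj).trans (hb w hw (Ne.symm (hji ▸ hiw)))
    · exact hb j hj hji
  by_cases h : T.desc i w
  · rw [util_of_desc hi hiw h]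
    have : bstar b (T.Vminus A (T.pathVx w (T.depth i + 1))) ≤ m :=
      bstar_le hm fun j hj => hbA j (mem_Vminus.1 hj).1
    linarith [le_max_right 0 (m - bstar b (T.Vminus A i))]
  · rw [util_of_not_desc hiw h]
    exact le_max_left _ _

theorem max_zero_sub_le_util_of_desc (hbA : ∀ j ∈ A, 0 ≤ b j) (hiA : i ∈ A) (hi : i ≠ T.s)
    (hiw : i ≠ w) (h : T.desc i w) :
    max 0 (b i - bstar b (T.Vminus A i)) ≤ T.util A b w vi i := by
  rw [util_of_desc hi hiw h]
  set c := T.pathVx w (T.depth i + 1)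
  have hci : T.parent c = i := by
    rw [parent_pathVx_succ (depth_lt_and_pathVx_depth_of_desc hi h).1,
      (depth_lt_and_pathVx_depth_of_desc hi h).2]
  have hic := desc_of_parent_eq hci
  have hbi : b i ≤ bstar b (T.Vminus A c) :=
    le_bstar (mem_Vminus.2 ⟨hiA, ne_of_desc hi hic, not_desc_of_desc hi hic⟩)
  have hP : bstar b (T.Vminus A i) ≤ bstar b (T.Vminus A c) :=
    bstar_mono (fun j hj => hbA j (mem_Vminus.1 hj).1) (Vminus_subset_Vminus_of_desc hic A)
  exact max_le (by linarith) (by linarith)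

end Utility

section EqBid

variable {T} [Fintype α] {v : α → ℝ} {δ : ℝ} {istar j : α}

theorem bstar_desc_le (hm : 0 ≤ v istar) (hmax : ∀ k ∈ T.agents, v k ≤ v istar) :
    bstar v (T.agents.filter (fun k => T.desc j k)) ≤ v istar :=
  bstar_le hm fun k hk => hmax k (Finset.mem_filter.1 hk).1

theorem eqBid_le (hδ : 0 ≤ δ) (hm : 0 ≤ v istar) (hmax : ∀ k ∈ T.agents, v k ≤ v istar)
    (hj : j ∈ T.agents) : T.eqBid v δ j ≤ v istar :=
  max_le (hmax j hj) (by linarith [bstar_desc_le (j := j) hm hmax])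

theorem eqBid_lt (hδ : 0 < δ) (hm : 0 ≤ v istar) (hmax : ∀ k ∈ T.agents, v k ≤ v istar)
    (hlt : v j < v istar) : T.eqBid v δ j < v istar :=
  max_lt hlt (by linarith [bstar_desc_le (j := j) hm hmax])

theorem eqBid_eq_of_forall_le (hδ : 0 ≤ δ) (hm : 0 ≤ v istar)
    (hmax : ∀ k ∈ T.agents, v k ≤ v istar) : T.eqBid v δ istar = v istar :=
  max_eq_left (by linarith [bstar_desc_le (j := istar) hm hmax])

theorem eqBid_nonneg (hj : 0 ≤ v j) : 0 ≤ T.eqBid v δ j :=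
  hj.trans (le_max_left _ _)

theorem sub_le_eqBid_of_desc {k : α} (hk : k ∈ T.agents) (h : T.desc j k) :
    v k - δ ≤ T.eqBid v δ j :=
  calc v k - δ ≤ bstar v (T.agents.filter (fun k => T.desc j k)) - δ := by
        linarith [le_bstar (b := v) (Finset.mem_filter.2 ⟨hk, h⟩)]
    _ ≤ T.eqBid v δ j := le_max_right _ _

theorem max_zero_sub_sub_le_util_eqBid (hpos : ∀ k ∈ T.agents, 0 ≤ v k)
    (histar : istar ∈ T.agents) (hmax : ∀ k ∈ T.agents, v k ≤ v istar) (hδ : 0 ≤ δ)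
    {i : α} (hi : i ∈ T.agents) :
    max 0 (v istar - bstar (T.eqBid v δ) (T.Vminus T.agents i)) - δ ≤
      T.util T.agents (T.eqBid v δ) istar (v i) i := by
  set P := bstar (T.eqBid v δ) (T.Vminus T.agents i)
  have hm := hpos istar histar
  have hnonneg : ∀ k ∈ T.agents, 0 ≤ T.eqBid v δ k := fun k hk => eqBid_nonneg (hpos k hk)
  by_cases hii : i = istar
  · subst hii
    have hP : P ≤ v i := bstar_le hm fun k hk => eqBid_le hδ hm hmax (mem_Vminus.1 hk).1
    rw [util_winner, max_eq_right (by linarith)]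
    linarith
  by_cases h : T.desc i istar
  · have hancestor :=
      max_zero_sub_le_util_of_desc (vi := v i) hnonneg hi (mem_agents.1 hi) hii h
    have hbid := sub_le_eqBid_of_desc (v := v) (δ := δ) histar h
    have hshift : max 0 (v istar - P) ≤ max 0 (T.eqBid v δ i - P) + δ :=
      max_le (by linarith [le_max_left 0 (T.eqBid v δ i - P)])
        (by linarith [le_max_right 0 (T.eqBid v δ i - P)])
    linarith
  · have hmP : v istar ≤ P := by
      have := le_bstar (b := T.eqBid v δ) (mem_Vminus.2 ⟨histar, Ne.symm hii, h⟩)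
      rwa [eqBid_eq_of_forall_le hδ hm hmax] at this
    rw [util_of_not_desc hii h, max_eq_left (by linarith)]
    linarith

end EqBid

end DiffusionTree

open DiffusionTree in
theorem trdm_epsilon_approximate_nash_general
    {α : Type*} [Fintype α] [LinearOrder α] (T : DiffusionTree α)
    (v : α → ℝ) (hpos : ∀ j ∈ T.agents, 0 ≤ v j)
    (hdist : ∀ j ∈ T.agents, ∀ j' ∈ T.agents, j ≠ j' → v j ≠ v j')
    -- the tie-breaking winner selector: a highest bidder, closest to `s`,
    -- remaining ties broken by the linear order on `α`
    (W : Finset α → (α → ℝ) → α)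
    (hW : ∀ (A : Finset α) (b : α → ℝ), A.Nonempty →
      W A b ∈ A ∧
      (∀ j ∈ A, b j ≤ b (W A b)) ∧
      (∀ j ∈ A, b j = b (W A b) → T.depth (W A b) ≤ T.depth j) ∧
      (∀ j ∈ A, b j = b (W A b) → T.depth j = T.depth (W A b) → W A b ≤ j)) :
    ∀ ε : ℝ, 0 < ε → ∃ δ0 : ℝ, 0 < δ0 ∧ ∀ δ : ℝ, 0 < δ → δ < δ0 →
      ∀ i ∈ T.agents, ∀ β : ℝ, 0 ≤ β →
        ∀ E' : Finset α, (∀ c ∈ E', T.parent c = i) →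
          T.util (T.removeSubtrees E') (Function.update (T.eqBid v δ) i β)
              (W (T.removeSubtrees E') (Function.update (T.eqBid v δ) i β)) (v i) i
            ≤ T.util T.agents (T.eqBid v δ)
                (W T.agents (T.eqBid v δ)) (v i) i + ε := by
  intro ε hε
  refine ⟨ε, hε, fun δ hδ hδε i hi β _ E' hE => ?_⟩
  obtain ⟨istar, histar, hmax⟩ := T.agents.exists_max_image v ⟨i, hi⟩
  have hm := hpos istar histar
  have hwin : W T.agents (T.eqBid v δ) = istar := by
    obtain ⟨hw, hwmax, -⟩ := hW T.agents (T.eqBid v δ) ⟨i, hi⟩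
    by_contra hne
    have hlt := eqBid_lt hδ hm hmax ((hmax _ hw).lt_of_ne (hdist _ hw _ histar hne))
    have := hwmax istar histar
    rw [eqBid_eq_of_forall_le hδ.le hm hmax] at this
    linarith
  obtain ⟨hw', hw'max, -⟩ :=
    hW (T.removeSubtrees E') (Function.update (T.eqBid v δ) i β) ⟨i, mem_removeSubtrees hi hE⟩
  have hdev := util_le_max_zero_sub hm (hmax i hi) (mem_agents.1 hi) hw' hw'max
    fun j hj hji => by
      rw [Function.update_of_ne hji]
      exact eqBid_le hδ.le hm hmax (removeSubtrees_subset_agents E' hj)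
  rw [bstar_update_Vminus_removeSubtrees β hE] at hdev
  have hequ := max_zero_sub_sub_le_util_eqBid hpos histar hmax hδ.le hi
  rw [hwin]
  linarith

open DiffusionTree in
/-- The bid profile `b_i(δ) = max(v_i, max_{j∈D_i} v_j − δ)` with
full (truthful) referrals is an ε-approximate Nash equilibrium of TRDM: for every
`ε > 0` there exists `δ0 > 0` such that for every `δ ∈ (0, δ0)` and every agent `i`,
no unilateral deviation — any bid `β ≥ 0` together with deleting any subset of `i`'s
out-edges (removing the corresponding subtrees from the auction), TRDM then being
run on the resulting tree with the other remaining agents bidding `b_j(δ)` — gives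
agent `i` utility more than `ε` above its utility at the profile `(b_j(δ))_j` on the
full tree. The winner selector `W` picks a highest bidder closest to `s`, remaining
ties broken by the fixed linear order on `α`. -/
theorem trdm_epsilon_approximate_nash
    {α : Type*} [Fintype α] [LinearOrder α] (T : DiffusionTree α)
    (v : α → ℝ) (hpos : ∀ j ∈ T.agents, 0 ≤ v j)
    (hdist : ∀ j ∈ T.agents, ∀ j' ∈ T.agents, j ≠ j' → v j ≠ v j')
    (hne : T.agents.Nonempty)
    -- the tie-breaking winner selector: a highest bidder, closest to `s`,
    -- remaining ties broken by the linear order on `α`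
    (W : Finset α → (α → ℝ) → α)
    (hW : ∀ (A : Finset α) (b : α → ℝ), A.Nonempty →
      W A b ∈ A ∧
      (∀ j ∈ A, b j ≤ b (W A b)) ∧
      (∀ j ∈ A, b j = b (W A b) → T.depth (W A b) ≤ T.depth j) ∧
      (∀ j ∈ A, b j = b (W A b) → T.depth j = T.depth (W A b) → W A b ≤ j)) :
    ∀ ε : ℝ, 0 < ε → ∃ δ0 : ℝ, 0 < δ0 ∧ ∀ δ : ℝ, 0 < δ → δ < δ0 →
      ∀ i ∈ T.agents, ∀ β : ℝ, 0 ≤ β →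
        ∀ E' : Finset α, (∀ c ∈ E', T.parent c = i) →
          T.util (T.removeSubtrees E') (Function.update (T.eqBid v δ) i β)
              (W (T.removeSubtrees E') (Function.update (T.eqBid v δ) i β)) (v i) i
            ≤ T.util T.agents (T.eqBid v δ)
                (W T.agents (T.eqBid v δ)) (v i) i + ε :=
  trdm_epsilon_approximate_nash_general T v hpos hdist W hW
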